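/- (Knaster) Let X be a nonempty separable metrizable topological space. Then X has a separable metrizable one-point connectification if and only if X can be embedded in a connected separable metrizable space as a proper open subspace; that is, there exist a connected separable metrizable space Y and a dense embedding of X into Y whose complement is a singleton, if and only if there exist a connected separable metrizable space Z and an open embedding of X into Z whose image is a proper subset of Z. -/

import Mathlib

open Metric Set Filter Topology

section KnasterAux

variable {X : Type*} {Z : Type*} [MetricSpace Z] (f : X → Z)

/-- The quotient-style distance on `Option X` induced by collapsing the complement of the
range of `f` to the point `none`. -/
noncomputable def kdist : Option X → Option X → ℝ
  | some a, some b => min (dist (f a) (f b))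
      (infDist (f a) (Set.range f)ᶜ + infDist (f b) (Set.range f)ᶜ)
  | some a, none => infDist (f a) (Set.range f)ᶜ
  | none, some b => infDist (f b) (Set.range f)ᶜ
  | none, none => 0

theorem kdist_comm (x y : Option X) : kdist f x y = kdist f y x := by
  cases x <;> cases y <;> simp [kdist, dist_comm, add_comm, min_comm]

theorem kdist_triangle (x y z : Option X) :
    kdist f x z ≤ kdist f x y + kdist f y z := by
  set A := (Set.range f)ᶜ
  cases x with
  | none =>
    cases y with
    | none =>
      cases z <;> simp [kdist]
    | some b =>
      cases z with
      | none =>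
        simp only [kdist]
        linarith [infDist_nonneg (s := A) (x := f b)]
      | some c =>
        simp only [kdist]
        have h1 : infDist (f c) A ≤ infDist (f b) A + dist (f b) (f c) := by
          rw [dist_comm]; exact infDist_le_infDist_add_dist
        have hnb := infDist_nonneg (s := A) (x := f b)
        rcases min_cases (dist (f b) (f c)) (infDist (f b) A + infDist (f c) A) with
          ⟨he, _⟩ | ⟨he, _⟩ <;> rw [he] <;> linarith
  | some a =>
    cases y with
    | none =>
      cases z with
      | none =>
        simp only [kdist]
        linarith [infDist_nonneg (s := A) (x := f a)]
      | some c =>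
        simp only [kdist]
        exact le_trans (min_le_right _ _) le_rfl
    | some b =>
      have hab : infDist (f a) A ≤ infDist (f b) A + dist (f a) (f b) :=
        infDist_le_infDist_add_dist
      have hnb := infDist_nonneg (s := A) (x := f b)
      cases z with
      | none =>
        simp only [kdist]
        have hbc : infDist (f a) A ≤ infDist (f a) A := le_rfl
        rcases min_cases (dist (f a) (f b)) (infDist (f a) A + infDist (f b) A) with
          ⟨he, _⟩ | ⟨he, _⟩ <;> rw [he] <;> linarith
      | some c =>
        simp only [kdist]
        have L1 : min (dist (f a) (f c)) (infDist (f a) A + infDist (f c) A)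
            ≤ dist (f a) (f c) := min_le_left _ _
        have L2 : min (dist (f a) (f c)) (infDist (f a) A + infDist (f c) A)
            ≤ infDist (f a) A + infDist (f c) A := min_le_right _ _
        have htr := dist_triangle (f a) (f b) (f c)
        have hcb : infDist (f c) A ≤ infDist (f b) A + dist (f c) (f b) :=
          infDist_le_infDist_add_dist
        rw [dist_comm (f c) (f b)] at hcb
        rcases min_cases (dist (f a) (f b)) (infDist (f a) A + infDist (f b) A) with
            ⟨h1, _⟩ | ⟨h1, _⟩ <;>
          rcases min_cases (dist (f b) (f c)) (infDist (f b) A + infDist (f c) A) with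
            ⟨h2, _⟩ | ⟨h2, _⟩ <;> rw [h1, h2] <;> linarith

theorem kdist_self (x : Option X) : kdist f x x = 0 := by
  cases x with
  | none => rfl
  | some a =>
    simp only [kdist, dist_self]
    have := infDist_nonneg (s := (Set.range f)ᶜ) (x := f a)
    rw [min_eq_left (by linarith)]

/-- The metric space on `Option X` obtained by collapsing the complement of the range of `f`. -/
noncomputable def kmetric (hinj : Function.Injective f)
    (hA : IsClosed (Set.range f)ᶜ) (hAne : (Set.range f)ᶜ.Nonempty) :
    MetricSpace (Option X) where
  dist := kdist f
  dist_self := kdist_self f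
  dist_comm := kdist_comm f
  dist_triangle := kdist_triangle f
  eq_of_dist_eq_zero := by
    intro x y h
    have pos : ∀ a : X, 0 < infDist (f a) (Set.range f)ᶜ := fun a =>
      (hA.notMem_iff_infDist_pos hAne).1 (by simp)
    cases x with
    | none =>
      cases y with
      | none => rfl
      | some b => exact absurd h (by simpa [kdist] using (pos b).ne')
    | some a =>
      cases y with
      | none => exact absurd h (by simpa [kdist] using (pos a).ne')
      | some b =>
        simp only [kdist] at h
        rcases min_cases (dist (f a) (f b))
            (infDist (f a) (Set.range f)ᶜ + infDist (f b) (Set.range f)ᶜ) with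
          ⟨he, _⟩ | ⟨he, _⟩
        · rw [he] at h
          exact congrArg some (hinj (dist_eq_zero.1 h))
        · rw [he] at h
          exact absurd h (by have := pos a; have := pos b; linarith)

end KnasterAux

/-- (Knaster) A nonempty separable metrizable space has a separable metrizable
one-point connectification if and only if it can be embedded in a connected
separable metrizable space as a proper open subspace. -/
theorem knaster_one_point_connectification
    (X : Type u) [TopologicalSpace X] [Nonempty X]
    [TopologicalSpace.MetrizableSpace X] [TopologicalSpace.SeparableSpace X] :
    (∃ (Y : Type u) (_ : TopologicalSpace Y), ConnectedSpace Y ∧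
      TopologicalSpace.MetrizableSpace Y ∧ TopologicalSpace.SeparableSpace Y ∧
      ∃ e : X → Y, IsDenseEmbedding e ∧ ∃ p : Y, (Set.range e)ᶜ = {p}) ↔
    (∃ (Z : Type u) (_ : TopologicalSpace Z), ConnectedSpace Z ∧
      TopologicalSpace.MetrizableSpace Z ∧ TopologicalSpace.SeparableSpace Z ∧
      ∃ f : X → Z, Topology.IsOpenEmbedding f ∧ Set.range f ≠ Set.univ) := by
  constructor
  · -- easy direction: `Y` itself works
    rintro ⟨Y, tY, hconn, hmetr, hsep, e, he, p, hp⟩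
    refine ⟨Y, tY, hconn, hmetr, hsep, e, ?_, ?_⟩
    · refine ⟨he.isEmbedding, ?_⟩
      have : Set.range e = ({p} : Set Y)ᶜ := by rw [← hp, compl_compl]
      rw [this]
      exact isClosed_singleton.isOpen_compl
    · intro h
      have : p ∈ (Set.range e)ᶜ := by rw [hp]; rfl
      rw [h] at this
      simp at this
  · -- hard direction: Knaster's construction
    rintro ⟨Z, tZ, hconn, hmetr, hsep, f, hf, hne⟩
    letI : MetricSpace Z := TopologicalSpace.metrizableSpaceMetric Z
    set A : Set Z := (Set.range f)ᶜ with hA_def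
    have hAclosed : IsClosed A := hf.isOpen_range.isClosed_compl
    have hAne : A.Nonempty := by
      rw [hA_def, nonempty_compl]; exact hne
    have hinj : Function.Injective f := hf.injective
    have hpos : ∀ a : X, 0 < infDist (f a) A := fun a =>
      (hAclosed.notMem_iff_infDist_pos hAne).1 (by simp [hA_def])
    letI m : MetricSpace (Option X) := kmetric f hinj hAclosed hAne
    -- key fact: points of X come arbitrarily close to A
    have hclose : ∀ ε > (0:ℝ), ∃ a : X, infDist (f a) A < ε := by
      intro ε hε
      by_contra hcon
      push_neg at hcon
      have hU : IsOpen {z : Z | infDist z A < ε} :=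
        isOpen_lt (continuous_infDist_pt A) continuous_const
      have hsub : {z : Z | infDist z A < ε} ⊆ A := by
        intro z hz
        by_contra hzA
        rw [hA_def, mem_compl_iff, not_not] at hzA
        obtain ⟨a, rfl⟩ := hzA
        exact absurd hz (not_lt.2 (hcon a))
      have hsup : A ⊆ {z : Z | infDist z A < ε} := fun z hz => by
        simp only [mem_setOf_eq, infDist_zero_of_mem hz]; exact hε
      have heq : {z : Z | infDist z A < ε} = A := le_antisymm hsub hsup
      have hclopen : IsClopen A := ⟨hAclosed, heq ▸ hU⟩
      rcases isClopen_iff.1 hclopen with h | h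
      · exact hAne.ne_empty h
      · have : Set.range f = ∅ := by
          rw [← compl_compl (Set.range f), ← hA_def, h, compl_univ]
        exact (Set.range_nonempty f).ne_empty this
    -- the projection Z → Option X is 1-Lipschitz
    classical
    set q : Z → Option X := fun z => if h : z ∈ Set.range f then some h.choose else none
      with hq_def
    have hq_lip : ∀ z w : Z, dist (q z) (q w) ≤ dist z w := by
      intro z w
      by_cases hz : z ∈ Set.range f <;> by_cases hw : w ∈ Set.range f <;>
        simp only [hq_def, hz, hw, dif_pos, dif_neg, not_false_iff]
      · show kdist f (some hz.choose) (some hw.choose) ≤ dist z w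
        simp only [kdist, hz.choose_spec, hw.choose_spec]
        exact min_le_left _ _
      · show kdist f (some hz.choose) none ≤ dist z w
        simp only [kdist, hz.choose_spec]
        exact infDist_le_dist_of_mem hw
      · show kdist f none (some hw.choose) ≤ dist z w
        simp only [kdist, hw.choose_spec]
        rw [dist_comm]
        exact infDist_le_dist_of_mem hz
      · show kdist f (none : Option X) none ≤ dist z w
        simp only [kdist]
        exact dist_nonneg
    have hq_cont : Continuous q :=
      (LipschitzWith.of_dist_le_mul (K := 1) (by simpa using hq_lip)).continuous
    have hq_surj : Function.Surjective q := by
      rintro (_ | a)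
      · obtain ⟨z, hz⟩ := hAne
        have hz' : z ∉ Set.range f := hz
        refine ⟨z, ?_⟩
        simp only [hq_def, dif_neg hz']
      · refine ⟨f a, ?_⟩
        have hm : f a ∈ Set.range f := ⟨a, rfl⟩
        simp only [hq_def, hm, dif_pos]
        exact congrArg some (hinj hm.choose_spec)
    haveI hYconn : ConnectedSpace (Option X) := hq_surj.connectedSpace hq_cont
    -- `some` is inducing
    have hsome_dist : ∀ a b : X, dist (some a : Option X) (some b)
        = min (dist (f a) (f b)) (infDist (f a) A + infDist (f b) A) := fun a b => rfl
    have hind : IsInducing (some : X → Option X) := by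
      rw [isInducing_iff_nhds]
      intro a
      rw [hf.isInducing.nhds_eq_comap a]
      refine HasBasis.ext ((Metric.nhds_basis_ball (x := f a)).comap f)
        ((Metric.nhds_basis_ball (x := (some a : Option X))).comap some) ?_ ?_
      · -- for each ε-ball in Z, find a ball in Option X inside it
        intro ε hε
        refine ⟨min ε (infDist (f a) A), lt_min hε (hpos a), ?_⟩
        intro b hb
        simp only [mem_preimage, mem_ball, dist_comm] at hb ⊢
        rw [hsome_dist] at hb
        rcases min_cases (dist (f a) (f b)) (infDist (f a) A + infDist (f b) A) with
          ⟨he, _⟩ | ⟨he, _⟩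
        · rw [he] at hb; exact lt_of_lt_of_le hb (min_le_left _ _)
        · rw [he] at hb
          have := infDist_nonneg (s := A) (x := f b)
          have := lt_of_lt_of_le hb (min_le_right _ _)
          linarith
      · -- for each ε-ball in Option X, the ε-ball in Z maps inside it
        intro ε hε
        refine ⟨ε, hε, ?_⟩
        intro b hb
        simp only [mem_preimage, mem_ball, dist_comm] at hb ⊢
        rw [hsome_dist]
        exact lt_of_le_of_lt (min_le_left _ _) hb
    have hdense : DenseRange (some : X → Option X) := by
      rw [Metric.denseRange_iff]
      rintro (_ | b) ε hε
      · obtain ⟨a, ha⟩ := hclose ε hε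
        exact ⟨a, show kdist f none (some a) < ε from ha⟩
      · exact ⟨b, by simpa using hε⟩
    refine ⟨Option X, inferInstance, hYconn, inferInstance, ?_, some, ?_, none, ?_⟩
    · exact hdense.separableSpace hind.continuous
    · exact ⟨⟨hind, hdense⟩, Option.some_injective X⟩
    · exact Set.compl_range_some X
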